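/- With W̃ as defined via W̃(R, e, c) := max{ |e + ∑_{l∈R} Y_l c|, λ·max_{R'⊆R} |e + ∑_{l∈R'} Y_l c| }, for λ ∈ (0,1), pairwise-disjoint projections Y_l, and any m ∈ R, it holds that W̃(R \ {m}, e + Y_m c, c) ≤ W̃(R, e, c). -/

import Mathlib

/-- Diagonal 0-1 projection onto the coordinates in `S`. -/
noncomputable def diagProj {n : ℕ} (S : Finset (Fin n))
    (v : EuclideanSpace ℝ (Fin n)) : EuclideanSpace ℝ (Fin n) :=
  (WithLp.equiv 2 (Fin n → ℝ)).symm (fun j => if j ∈ S then v j else 0)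

/-- W̃(R, e, c) := max{ |e + ∑_{l∈R} Y_l c|, λ·max_{R'⊆R} |e + ∑_{l∈R'} Y_l c| }. -/
noncomputable def Wtil {n : ℕ} {ι : Type*} [DecidableEq ι]
    (S : ι → Finset (Fin n)) (lam : ℝ) (R : Finset ι)
    (e c : EuclideanSpace ℝ (Fin n)) : ℝ :=
  max ‖e + ∑ l ∈ R, diagProj (S l) c‖
    (lam * R.powerset.sup' (Finset.powerset_nonempty R)
      (fun R' => ‖e + ∑ l ∈ R', diagProj (S l) c‖))

/-
Moving the summand of `m` into the offset turns the partial sum over `R' ⊆ R \ {m}` into the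
partial sum over `insert m R' ⊆ R`; so every term on the left-hand side already occurs on the
right, and taking maxima finishes the proof.
-/

namespace Finset

variable {ι α : Type*} [DecidableEq ι]

theorem add_add_sum_eq_add_sum_insert {M : Type*} [AddCommMonoid M] {s : Finset ι} {m : ι}
    (hm : m ∉ s) (a : M) (f : ι → M) :
    a + f m + ∑ l ∈ s, f l = a + ∑ l ∈ insert m s, f l := by
  rw [sum_insert hm, add_assoc]

theorem sup'_powerset_erase_insert_le [SemilatticeSup α] {R : Finset ι} {m : ι} (hm : m ∈ R)
    (g : Finset ι → α) :
    (R.erase m).powerset.sup' (powerset_nonempty _) (fun R' => g (insert m R')) ≤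
      R.powerset.sup' (powerset_nonempty _) g :=
  sup'_le _ _ fun _ hR' =>
    le_sup' g <| mem_powerset.2 <|
      insert_subset hm ((mem_powerset.1 hR').trans (erase_subset m R))

end Finset

open Finset in
theorem stmt4_general {n : ℕ} {ι : Type*} [DecidableEq ι]
    (S : ι → Finset (Fin n))
    (R : Finset ι) (e c : EuclideanSpace ℝ (Fin n))
    (lam : ℝ) (hlam : lam ∈ Set.Ioo (0:ℝ) 1)
    (m : ι) (hm : m ∈ R) :
    Wtil S lam (R.erase m) (e + diagProj (S m) c) c ≤ Wtil S lam R e c := by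
  have shift : ∀ R' ∈ (R.erase m).powerset,
      ‖e + diagProj (S m) c + ∑ l ∈ R', diagProj (S l) c‖ =
        ‖e + ∑ l ∈ insert m R', diagProj (S l) c‖ := fun R' hR' => by
    rw [add_add_sum_eq_add_sum_insert (f := fun l => diagProj (S l) c)
      fun h => notMem_erase m R (mem_powerset.1 hR' h)]
  unfold Wtil
  refine max_le_max ?_ (mul_le_mul_of_nonneg_left ?_ hlam.1.le)
  · rw [shift _ (mem_powerset_self _), insert_erase hm]
  · rw [sup'_congr _ rfl shift]
    exact sup'_powerset_erase_insert_le hm fun R' => ‖e + ∑ l ∈ R', diagProj (S l) c‖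

/-- for any m ∈ R, W̃(R \ {m}, e + Y_m c, c) ≤ W̃(R, e, c). -/
theorem stmt4 {n : ℕ} {ι : Type*} [DecidableEq ι]
    (S : ι → Finset (Fin n))
    (hdisj : ∀ l m, l ≠ m → Disjoint (S l) (S m))
    (R : Finset ι) (e c : EuclideanSpace ℝ (Fin n))
    (lam : ℝ) (hlam : lam ∈ Set.Ioo (0:ℝ) 1)
    (m : ι) (hm : m ∈ R) :
    Wtil S lam (R.erase m) (e + diagProj (S m) c) c ≤ Wtil S lam R e c :=
  stmt4_general S R e c lam hlam m hm
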